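/- arXiv:math/9904177 — 9 statements merged into one kernel-verified Lean document; each statement's English description precedes it below -/
import Mathlib

section
/- For every integer n, the n-th power of the matrix J = [[4,1],[32,0]] equals (4^(n-1)/3) times the matrix [[4(2·2^n+(-1)^n), 2^n-(-1)^n],[32(2^n-(-1)^n), 4(2^n+2(-1)^n)]]. -/
open Matrix

lemma aux_smul_fin_two (c : ℚ) (a b d e : ℚ) :
    c • !![a, b; d, e] = !![c * a, c * b; c * d, c * e] := by
  ext i j
  fin_cases i <;> fin_cases j <;> simp

lemma aux_eq_fin_two {a b c d e f g h : ℚ} (h1 : a = e) (h2 : b = f) (h3 : c = g)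
    (h4 : d = h) : !![a, b; c, d] = !![e, f; g, h] := by
  subst_vars; rfl

/-- For every integer `n`, `J^n = (4^(n-1)/3) • M_n` where
`J = !![4,1;32,0]` and
`M_n = !![4*(2*2^n+(-1)^n), 2^n-(-1)^n; 32*(2^n-(-1)^n), 4*(2^n+2*(-1)^n)]`. -/
theorem stmt2 (n : ℤ) :
    let J : Matrix (Fin 2) (Fin 2) ℚ := !![4, 1; 32, 0]
    J ^ n = ((4 : ℚ) ^ (n - 1) / 3) •
      !![4 * (2 * (2 : ℚ) ^ n + (-1 : ℚ) ^ n), (2 : ℚ) ^ n - (-1 : ℚ) ^ n;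
         32 * ((2 : ℚ) ^ n - (-1 : ℚ) ^ n), 4 * ((2 : ℚ) ^ n + 2 * (-1 : ℚ) ^ n)] := by
  intro J
  have hdet : IsUnit J.det := by
    simp [J, Matrix.det_fin_two_of]
  induction n using Int.induction_on with
  | zero =>
    ext i j
    fin_cases i <;> fin_cases j <;>
      simp [Matrix.one_apply] <;> norm_num
  | succ n ih =>
    rw [Matrix.zpow_add_one hdet, ih, smul_mul_assoc]
    show _ • (_ * !![(4:ℚ), 1; 32, 0]) = _
    rw [Matrix.mul_fin_two, aux_smul_fin_two, aux_smul_fin_two]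
    have h2 : (2:ℚ) ^ ((n:ℤ) + 1) = 2 ^ (n:ℤ) * 2 := by
      rw [zpow_add_one₀ (by norm_num)]
    have hm : (-1:ℚ) ^ ((n:ℤ) + 1) = (-1) ^ (n:ℤ) * (-1) := by
      rw [zpow_add_one₀ (by norm_num)]
    have h4 : (4:ℚ) ^ ((n:ℤ) + 1 - 1) = 4 ^ ((n:ℤ) - 1) * 4 := by
      rw [show (n:ℤ) + 1 - 1 = (n:ℤ) - 1 + 1 by ring, zpow_add_one₀ (by norm_num)]
    exact aux_eq_fin_two (by rw [h2, hm, h4]; ring) (by rw [h2, hm, h4]; ring)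
      (by rw [h2, hm, h4]; ring) (by rw [h2, hm, h4]; ring)
  | pred n ih =>
    have hJinv : J⁻¹ = !![0, 1/32; 1, -1/8] := by
      rw [Matrix.inv_def]
      simp [J, Matrix.det_fin_two_of, Matrix.adjugate_fin_two_of]
      norm_num
    rw [Matrix.zpow_sub_one hdet, ih, smul_mul_assoc, hJinv,
      Matrix.mul_fin_two, aux_smul_fin_two, aux_smul_fin_two]
    have h2 : (2:ℚ) ^ (-(n:ℤ) - 1) = 2 ^ (-(n:ℤ)) * 2⁻¹ := by
      rw [zpow_sub_one₀ (by norm_num)]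
    have hm : (-1:ℚ) ^ (-(n:ℤ) - 1) = (-1) ^ (-(n:ℤ)) * (-1) := by
      rw [zpow_sub_one₀ (by norm_num)]; norm_num
    have h4 : (4:ℚ) ^ (-(n:ℤ) - 1 - 1) = 4 ^ (-(n:ℤ) - 1) * 4⁻¹ := by
      rw [zpow_sub_one₀ (by norm_num)]
    exact aux_eq_fin_two (by rw [h2, hm, h4]; ring) (by rw [h2, hm, h4]; ring)
      (by rw [h2, hm, h4]; ring) (by rw [h2, hm, h4]; ring)
end

section
/- For every integer n, the n-th power of the matrix K = [[6,1],[16,0]] equals (2^(n-1)/5) times the matrix [[2(4·4^n+(-1)^n), 4^n-(-1)^n],[16(4^n-(-1)^n), 2(4^n+4(-1)^n)]]. -/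
set_option maxHeartbeats 1000000

open Matrix

/-- For every integer `n`, `K^n = (2^(n-1)/5) • M_n` where
`K = !![6,1;16,0]` and
`M_n = !![2*(4*4^n+(-1)^n), 4^n-(-1)^n; 16*(4^n-(-1)^n), 2*(4^n+4*(-1)^n)]`. -/
theorem stmt3 (n : ℤ) :
    let K : Matrix (Fin 2) (Fin 2) ℚ := !![6, 1; 16, 0]
    K ^ n = ((2 : ℚ) ^ (n - 1) / 5) •
      !![2 * (4 * (4 : ℚ) ^ n + (-1 : ℚ) ^ n), (4 : ℚ) ^ n - (-1 : ℚ) ^ n;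
         16 * ((4 : ℚ) ^ n - (-1 : ℚ) ^ n), 2 * ((4 : ℚ) ^ n + 4 * (-1 : ℚ) ^ n)] := by
  intro K
  have hdet : IsUnit (K.det) := by
    simp [K, Matrix.det_fin_two_of]
  have h4 : (4:ℚ) ≠ 0 := by norm_num
  have h2 : (2:ℚ) ≠ 0 := by norm_num
  have hm1 : (-1:ℚ) ≠ 0 := by norm_num
  induction n using Int.induction_on with
  | zero =>
    ext i j
    fin_cases i <;> fin_cases j <;> simp [K] <;> norm_num
  | succ k ih =>
    rw [Matrix.zpow_add_one hdet, ih]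
    ext i j
    fin_cases i <;> fin_cases j <;>
      simp [K, Matrix.mul_apply, Fin.sum_univ_two, zpow_add₀, zpow_sub₀, h2, h4, hm1,
        zpow_natCast] <;>
      field_simp <;> ring
  | pred k ih =>
    rw [show (-(k:ℤ)-1) = (-(k:ℤ)) - 1 from rfl, Matrix.zpow_sub_one hdet, ih]
    have hKinv : K⁻¹ = !![0, 1/16; 1, -3/8] := by
      rw [Matrix.inv_def]
      ext i j
      fin_cases i <;> fin_cases j <;>
        simp [K, Matrix.adjugate_fin_two, Matrix.det_fin_two_of] <;> norm_num
    rw [hKinv]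
    ext i j
    fin_cases i <;> fin_cases j <;>
      simp [K, Matrix.mul_apply, Fin.sum_univ_two, zpow_add₀, zpow_sub₀, _root_.zpow_neg, h2, h4, hm1,
        zpow_natCast] <;>
      field_simp <;> ring
end

section
/- The union over n ≥ 0 of J^(-n)(ℤ²), where J = [[4,1],[32,0]], equals ℤ[1/2]² as a subgroup of ℚ². -/
open Matrix

private def D (x : ℚ) : Prop := ∃ (a : ℤ) (k : ℕ), x = (a : ℚ) / 2 ^ k

private lemma D_add {x y : ℚ} (hx : D x) (hy : D y) : D (x + y) := by
  obtain ⟨a, k, rfl⟩ := hx; obtain ⟨b, j, rfl⟩ := hy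
  refine ⟨a * 2 ^ j + b * 2 ^ k, k + j, ?_⟩
  have hk : (2:ℚ) ^ k ≠ 0 := by positivity
  have hj : (2:ℚ) ^ j ≠ 0 := by positivity
  rw [div_add_div _ _ hk hj, pow_add]
  push_cast
  ring_nf

private lemma D_mul {x y : ℚ} (hx : D x) (hy : D y) : D (x * y) := by
  obtain ⟨a, k, rfl⟩ := hx; obtain ⟨b, j, rfl⟩ := hy
  refine ⟨a * b, k + j, ?_⟩
  rw [div_mul_div_comm, pow_add]
  push_cast
  ring_nf

private lemma D_int (a : ℤ) : D (a : ℚ) := ⟨a, 0, by simp⟩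

private noncomputable abbrev Jm : Matrix (Fin 2) (Fin 2) ℚ := !![4, 1; 32, 0]

private lemma Jinv_eq : Jm⁻¹ = !![0, 1/32; 1, -1/8] := by
  apply Matrix.inv_eq_right_inv
  ext i j
  fin_cases i <;> fin_cases j <;>
    (simp [Jm, Matrix.mul_apply, Fin.sum_univ_two]; try norm_num)

private lemma Jdet : IsUnit Jm.det := by
  have h : Jm.det = -32 := by simp [Jm, Matrix.det_fin_two_of]
  rw [h]
  norm_num

private lemma Jinv_mul : Jm⁻¹ * Jm = 1 := Matrix.nonsing_inv_mul _ Jdet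

private lemma D_pow_entry (n : ℕ) (i j : Fin 2) : D ((Jm⁻¹ ^ n) i j) := by
  induction n generalizing i j with
  | zero =>
    rw [pow_zero]
    rcases eq_or_ne i j with rfl | hij
    · rw [Matrix.one_apply_eq]; exact D_int 1
    · rw [Matrix.one_apply_ne hij]; exact D_int 0
  | succ n ih =>
    rw [pow_succ]
    have h1 : ∀ i j : Fin 2, D (Jm⁻¹ i j) := by
      intro i j
      rw [Jinv_eq]
      fin_cases i <;> fin_cases j <;> simp
      · exact D_int 0
      · exact ⟨1, 5, by norm_num⟩
      · exact D_int 1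
      · exact ⟨-1, 3, by norm_num⟩
    rw [Matrix.mul_apply, Fin.sum_univ_two]
    exact D_add (D_mul (ih i 0) (h1 0 j)) (D_mul (ih i 1) (h1 1 j))

private lemma key : ∀ (k : ℕ) (v : Fin 2 → ℚ), (∀ i, ∃ a : ℤ, v i = (a : ℚ) / 2 ^ k) →
    ∃ (n : ℕ) (w : Fin 2 → ℤ), v = (Jm⁻¹ ^ n) *ᵥ (fun i => (w i : ℚ)) := by
  intro k
  induction k with
  | zero =>
    intro v h
    choose w hw using h
    exact ⟨0, w, by funext i; simpa using hw i⟩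
  | succ k ih =>
    intro v h
    obtain ⟨a0, h0⟩ := h 0
    obtain ⟨a1, h1⟩ := h 1
    set u : Fin 2 → ℚ := ![((24 * a0 + 2 * a1 : ℤ) : ℚ) / 2 ^ k,
                          ((64 * a0 + 16 * a1 : ℤ) : ℚ) / 2 ^ k] with hu_def
    have hu : ∀ i, ∃ b : ℤ, u i = (b : ℚ) / 2 ^ k := by
      intro i
      fin_cases i
      · exact ⟨24 * a0 + 2 * a1, rfl⟩
      · exact ⟨64 * a0 + 16 * a1, rfl⟩
    obtain ⟨n, w, hw⟩ := ih u hu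
    refine ⟨n + 2, w, ?_⟩
    have cancel : ∀ x : Fin 2 → ℚ, Jm⁻¹ *ᵥ (Jm *ᵥ x) = x := by
      intro x
      rw [Matrix.mulVec_mulVec, Jinv_mul, Matrix.one_mulVec]
    have hJJ : u = Jm *ᵥ (Jm *ᵥ v) := by
      funext i
      fin_cases i <;>
        (simp [hu_def, Jm, Matrix.mulVec, dotProduct, Fin.sum_univ_two, h0, h1];
         push_cast; field_simp; ring)
    have h2 : v = Jm⁻¹ *ᵥ (Jm⁻¹ *ᵥ u) := by
      rw [hJJ, cancel, cancel]
    rw [h2, hw, Matrix.mulVec_mulVec, Matrix.mulVec_mulVec, mul_assoc,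
      ← pow_succ', ← pow_succ']

/-- The union over `n ≥ 0` of `J⁻ⁿ(ℤ²)`, where `J = !![4,1;32,0]`, equals
`ℤ[1/2]²` inside `ℚ²`: a vector `v ∈ ℚ²` lies in some `J⁻ⁿ(ℤ²)` if and only if
each of its coordinates is a dyadic rational. -/
theorem stmt5 (v : Fin 2 → ℚ) :
    let J : Matrix (Fin 2) (Fin 2) ℚ := !![4, 1; 32, 0]
    (∃ (n : ℕ) (w : Fin 2 → ℤ), v = (J⁻¹ ^ n) *ᵥ (fun i => (w i : ℚ))) ↔
    (∀ i, ∃ (a : ℤ) (k : ℕ), v i = (a : ℚ) / 2 ^ k) := by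
  intro J
  constructor
  · rintro ⟨n, w, rfl⟩ i
    have h : ((J⁻¹ ^ n) *ᵥ (fun i => (w i : ℚ))) i
        = (J⁻¹ ^ n) i 0 * (w 0 : ℚ) + (J⁻¹ ^ n) i 1 * (w 1 : ℚ) := by
      simp [Matrix.mulVec, dotProduct, Fin.sum_univ_two]
    rw [h]
    exact D_add (D_mul (D_pow_entry n i 0) (D_int (w 0)))
      (D_mul (D_pow_entry n i 1) (D_int (w 1)))
  · intro h
    choose a k hk using h
    apply key (max (k 0) (k 1)) v
    intro i
    have hle : k i ≤ max (k 0) (k 1) := by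
      fin_cases i
      · exact le_max_left _ _
      · exact le_max_right _ _
    refine ⟨a i * 2 ^ (max (k 0) (k 1) - k i), ?_⟩
    have hM : max (k 0) (k 1) = k i + (max (k 0) (k 1) - k i) := by omega
    rw [hk i, hM, pow_add]
    push_cast
    have hki : (2:ℚ) ^ (k i) ≠ 0 := by positivity
    have hd : (2:ℚ) ^ (max (k 0) (k 1) - k i) ≠ 0 := by positivity
    field_simp
    simp
end

section
/- The union over n ≥ 0 of K^(-n)(ℤ²), where K = [[6,1],[16,0]], equals ℤ[1/2]² as a subgroup of ℚ². -/
open Matrix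

private def Mk : Matrix (Fin 2) (Fin 2) ℚ := !![6, 1; 16, 0]

private def Dy (q : ℚ) : Prop := ∃ (a : ℤ) (k : ℕ), q = (a : ℚ) / 2 ^ k

private lemma Mk_inv : Mk⁻¹ = !![0, 1/16; 1, -3/8] := by
  apply Matrix.inv_eq_right_inv
  show Mk * _ = 1
  rw [Mk, Matrix.mul_fin_two, Matrix.one_fin_two]
  norm_num

private lemma Mk_det : IsUnit Mk.det := by
  rw [Mk, Matrix.det_fin_two_of]
  norm_num

private lemma dy_step (v : Fin 2 → ℚ) (h : ∀ i, Dy (v i)) (i : Fin 2) :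
    Dy ((Mk⁻¹ *ᵥ v) i) := by
  obtain ⟨a, k, ha⟩ := h 0
  obtain ⟨b, m, hb⟩ := h 1
  have hv : Mk⁻¹ *ᵥ v = ![v 1 / 16, v 0 - 3 / 8 * v 1] := by
    rw [Mk_inv]
    funext j
    fin_cases j <;>
      simp [Matrix.mulVec, dotProduct, Fin.sum_univ_two] <;> ring
  rw [hv]
  fin_cases i
  · refine ⟨b, m + 4, ?_⟩
    simp only [Matrix.cons_val_zero]
    rw [hb, pow_add]
    norm_num
    ring
  · refine ⟨a * 2 ^ (m + 3) - 3 * b * 2 ^ k, k + m + 3, ?_⟩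
    simp only [Matrix.cons_val_one, Matrix.head_cons]
    show v 0 - 3 / 8 * v 1 = _
    rw [ha, hb]
    have h2 : (2:ℚ) ^ k ≠ 0 := by positivity
    have h2' : (2:ℚ) ^ m ≠ 0 := by positivity
    field_simp
    push_cast
    ring

private lemma clear_denoms : ∀ (k : ℕ) (v : Fin 2 → ℚ),
    (∀ i, ∃ a : ℤ, v i * 2 ^ k = (a : ℚ)) →
    ∃ w : Fin 2 → ℤ, (Mk ^ (2 * k)) *ᵥ v = fun i => (w i : ℚ) := by
  intro k
  induction k with
  | zero =>
    intro v h
    obtain ⟨a, ha⟩ := h 0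
    obtain ⟨b, hb⟩ := h 1
    refine ⟨![a, b], ?_⟩
    simp only [mul_zero, pow_zero, Matrix.one_mulVec]
    funext i
    fin_cases i <;> simp <;> [exact (by linarith [ha] : v 0 = a); exact (by linarith [hb] : v 1 = b)]
  | succ k ih =>
    intro v h
    obtain ⟨a, ha⟩ := h 0
    obtain ⟨b, hb⟩ := h 1
    have hM2 : Mk ^ 2 = !![52, 6; 96, 16] := by
      rw [pow_two, Mk, Matrix.mul_fin_two]
      norm_num
    set u : Fin 2 → ℚ := (Mk ^ 2) *ᵥ v with hu
    have hu' : u = ![52 * v 0 + 6 * v 1, 96 * v 0 + 16 * v 1] := by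
      rw [hu, hM2]
      funext j
      fin_cases j <;> simp [Matrix.mulVec, dotProduct, Fin.sum_univ_two]
    have h0 : u 0 * 2 ^ k = ((26 * a + 3 * b : ℤ) : ℚ) := by
      rw [hu']
      show (52 * v 0 + 6 * v 1) * 2 ^ k = _
      push_cast
      rw [← ha, ← hb]
      ring
    have h1 : u 1 * 2 ^ k = ((48 * a + 8 * b : ℤ) : ℚ) := by
      rw [hu']
      show (96 * v 0 + 16 * v 1) * 2 ^ k = _
      push_cast
      rw [← ha, ← hb]
      ring
    have hd : ∀ i, ∃ c : ℤ, u i * 2 ^ k = (c : ℚ) := by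
      intro i
      fin_cases i
      · exact ⟨_, h0⟩
      · exact ⟨_, h1⟩
    obtain ⟨w, hw⟩ := ih u hd
    refine ⟨w, ?_⟩
    rw [hu, Matrix.mulVec_mulVec, ← pow_add] at hw
    have : 2 * k + 2 = 2 * (k + 1) := by ring
    rwa [this] at hw

/-- The union over `n ≥ 0` of `K⁻ⁿ(ℤ²)`, where `K = !![6,1;16,0]`, equals
`ℤ[1/2]²` inside `ℚ²`: a vector `v ∈ ℚ²` lies in some `K⁻ⁿ(ℤ²)` if and only if
each of its coordinates is a dyadic rational. -/
theorem stmt6 (v : Fin 2 → ℚ) :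
    let K : Matrix (Fin 2) (Fin 2) ℚ := !![6, 1; 16, 0]
    (∃ (n : ℕ) (w : Fin 2 → ℤ), v = (K⁻¹ ^ n) *ᵥ (fun i => (w i : ℚ))) ↔
    (∀ i, ∃ (a : ℤ) (k : ℕ), v i = (a : ℚ) / 2 ^ k) := by
  intro K
  have hK : K = Mk := rfl
  constructor
  · rintro ⟨n, w, rfl⟩ i
    rw [hK]
    induction n generalizing i with
    | zero =>
      refine ⟨w i, 0, ?_⟩
      simp
    | succ n ih =>
      have : Mk⁻¹ ^ (n + 1) *ᵥ (fun i => ((w i : ℚ))) =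
          Mk⁻¹ *ᵥ (Mk⁻¹ ^ n *ᵥ (fun i => ((w i : ℚ)))) := by
        rw [Matrix.mulVec_mulVec, ← pow_succ']
      rw [this]
      exact dy_step _ ih i
  · intro h
    obtain ⟨a, k, ha⟩ := h 0
    obtain ⟨b, m, hb⟩ := h 1
    set N := max k m with hN
    have h0 : v 0 * 2 ^ N = ((a * 2 ^ (N - k) : ℤ) : ℚ) := by
        rw [ha]
        have hk : k ≤ N := le_max_left _ _
        have : (2:ℚ) ^ N = 2 ^ k * 2 ^ (N - k) := by
          rw [← pow_add]; congr 1; omega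
        rw [this]
        push_cast
        field_simp
    have h1 : v 1 * 2 ^ N = ((b * 2 ^ (N - m) : ℤ) : ℚ) := by
        rw [hb]
        have hm : m ≤ N := le_max_right _ _
        have : (2:ℚ) ^ N = 2 ^ m * 2 ^ (N - m) := by
          rw [← pow_add]; congr 1; omega
        rw [this]
        push_cast
        field_simp
    have hint : ∀ i, ∃ c : ℤ, v i * 2 ^ N = (c : ℚ) := by
      intro i
      fin_cases i
      · exact ⟨_, h0⟩
      · exact ⟨_, h1⟩
    obtain ⟨w, hw⟩ := clear_denoms N v hint
    refine ⟨2 * N, w, ?_⟩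
    rw [hK, ← hw, Matrix.mulVec_mulVec]
    have hcomm : Commute Mk⁻¹ Mk := by
      show Mk⁻¹ * Mk = Mk * Mk⁻¹
      rw [Matrix.nonsing_inv_mul Mk Mk_det, Matrix.mul_nonsing_inv Mk Mk_det]
    rw [← hcomm.mul_pow, Matrix.nonsing_inv_mul Mk Mk_det, one_pow, Matrix.one_mulVec]
end

section
/- For no positive integers n and m is the matrix [[4,1],[32,0]]^n similar over ℚ to the matrix [[6,1],[16,0]]^m. -/
open Matrix

private lemma conj_pow' (Q D : Matrix (Fin 2) (Fin 2) ℚ) (hQ : IsUnit Q.det) (n : ℕ) :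
    (Q * D * Q⁻¹) ^ n = Q * D ^ n * Q⁻¹ := by
  induction n with
  | zero => simp [Matrix.mul_nonsing_inv _ hQ]
  | succ k ih =>
      rw [pow_succ, ih, pow_succ]
      simp only [Matrix.mul_assoc]
      rw [← Matrix.mul_assoc Q⁻¹ Q, Matrix.nonsing_inv_mul _ hQ, Matrix.one_mul]

private lemma trace_pow_of_conj (A Q : Matrix (Fin 2) (Fin 2) ℚ) (a b : ℚ)
    (hQ : IsUnit Q.det) (h : A * Q = Q * Matrix.diagonal ![a, b]) (n : ℕ) :
    (A ^ n).trace = a ^ n + b ^ n := by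
  have hA : A = Q * Matrix.diagonal ![a, b] * Q⁻¹ := by
    rw [← h, Matrix.mul_nonsing_inv_cancel_right _ _ hQ]
  rw [hA, conj_pow' Q _ hQ, Matrix.trace_mul_comm, ← Matrix.mul_assoc,
    Matrix.nonsing_inv_mul _ hQ, Matrix.one_mul, Matrix.diagonal_pow,
    Matrix.trace_diagonal, Fin.sum_univ_two]
  simp

/-- No positive powers of `J = !![4,1;32,0]` and `K = !![6,1;16,0]` are
similar over `ℚ`. -/
theorem stmt7 :
    let J : Matrix (Fin 2) (Fin 2) ℚ := !![4, 1; 32, 0]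
    let K : Matrix (Fin 2) (Fin 2) ℚ := !![6, 1; 16, 0]
    ¬ ∃ (n m : ℕ) (P : Matrix (Fin 2) (Fin 2) ℚ),
        0 < n ∧ 0 < m ∧ IsUnit P.det ∧ J ^ n = P * K ^ m * P⁻¹ := by
  intro J K
  rintro ⟨n, m, P, hn, hm, hP, heq⟩
  -- diagonalization data
  have hQJdet : IsUnit (!![1, 1; 4, -8] : Matrix (Fin 2) (Fin 2) ℚ).det := by
    rw [Matrix.det_fin_two_of]; norm_num
  have hQKdet : IsUnit (!![1, 1; 2, -8] : Matrix (Fin 2) (Fin 2) ℚ).det := by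
    rw [Matrix.det_fin_two_of]; norm_num
  have hJconj : J * !![1, 1; 4, -8] = !![1, 1; 4, -8] * Matrix.diagonal ![8, -4] := by
    show (!![4, 1; 32, 0] : Matrix (Fin 2) (Fin 2) ℚ) * _ = _
    ext i j
    fin_cases i <;> fin_cases j <;>
      simp [Matrix.mul_apply, Fin.sum_univ_two, Matrix.diagonal] <;> norm_num
  have hKconj : K * !![1, 1; 2, -8] = !![1, 1; 2, -8] * Matrix.diagonal ![8, -2] := by
    show (!![6, 1; 16, 0] : Matrix (Fin 2) (Fin 2) ℚ) * _ = _
    ext i j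
    fin_cases i <;> fin_cases j <;>
      simp [Matrix.mul_apply, Fin.sum_univ_two, Matrix.diagonal] <;> norm_num
  -- trace equality
  have htrK : (K ^ m).trace = (8 : ℚ) ^ m + (-2) ^ m :=
    trace_pow_of_conj K _ 8 (-2) hQKdet hKconj m
  have htrJ : (J ^ n).trace = (8 : ℚ) ^ n + (-4) ^ n :=
    trace_pow_of_conj J _ 8 (-4) hQJdet hJconj n
  have htr : (8 : ℚ) ^ n + (-4) ^ n = (8 : ℚ) ^ m + (-2) ^ m := by
    rw [← htrJ, ← htrK, heq, Matrix.trace_mul_comm, ← Matrix.mul_assoc,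
      Matrix.nonsing_inv_mul _ hP, Matrix.one_mul]
  -- determinant equality
  have hdet : ((-32 : ℚ)) ^ n = (-16 : ℚ) ^ m := by
    have h1 : (J ^ n).det = (K ^ m).det := by
      rw [heq, Matrix.det_mul, Matrix.det_mul, Matrix.det_nonsing_inv,
        Ring.inverse_eq_inv]
      have hP0 : P.det ≠ 0 := hP.ne_zero
      field_simp
    rw [Matrix.det_pow, Matrix.det_pow] at h1
    have hJd : J.det = (-32 : ℚ) := by
      show (!![4, 1; 32, 0] : Matrix (Fin 2) (Fin 2) ℚ).det = _
      rw [Matrix.det_fin_two_of]; norm_num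
    have hKd : K.det = (-16 : ℚ) := by
      show (!![6, 1; 16, 0] : Matrix (Fin 2) (Fin 2) ℚ).det = _
      rw [Matrix.det_fin_two_of]; norm_num
    rw [hJd, hKd] at h1
    exact h1
  -- |det| : 32^n = 16^m hence 5n = 4m
  have habs : (32 : ℚ) ^ n = (16 : ℚ) ^ m := by
    have h := congrArg abs hdet
    rw [abs_pow, abs_pow] at h
    norm_num at h
    exact h
  have hnat : (32 : ℕ) ^ n = 16 ^ m := by
    have h : ((32 ^ n : ℕ) : ℚ) = ((16 ^ m : ℕ) : ℚ) := by push_cast; exact habs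
    exact_mod_cast h
  have h54 : 5 * n = 4 * m := by
    have h2 : (2 : ℕ) ^ (5 * n) = 2 ^ (4 * m) := by
      rw [pow_mul, pow_mul]
      norm_num [hnat]
    exact Nat.pow_right_injective (le_refl 2) h2
  -- parity of n and m agree
  have hsign : ((-1 : ℚ)) ^ n = (-1) ^ m := by
    have h : ((-1 : ℚ)) ^ n * 32 ^ n = (-1) ^ m * 16 ^ m := by
      rw [← mul_pow, ← mul_pow]
      norm_num [hdet]
    rw [← habs] at h
    have h32 : (32 : ℚ) ^ n ≠ 0 := by positivity
    exact mul_right_cancel₀ h32 h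
  have hpar : n % 2 = m % 2 := by
    rcases Nat.even_or_odd n with he | ho <;> rcases Nat.even_or_odd m with he' | ho'
    · obtain ⟨a, ha⟩ := he; obtain ⟨b, hb⟩ := he'; omega
    · rw [he.neg_one_pow, ho'.neg_one_pow] at hsign; norm_num at hsign
    · rw [ho.neg_one_pow, he'.neg_one_pow] at hsign; norm_num at hsign
    · obtain ⟨a, ha⟩ := ho; obtain ⟨b, hb⟩ := ho'; omega
  -- hence n = 8t, m = 10t with t ≥ 1
  obtain ⟨t, ht1, hnt, hmt⟩ : ∃ t, 1 ≤ t ∧ n = 8 * t ∧ m = 10 * t := by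
    refine ⟨n / 8, by omega, by omega, by omega⟩
  subst hnt hmt
  -- trace equation in ℕ as powers of 2
  have he8 : Even (8 * t) := ⟨4 * t, by ring⟩
  have he10 : Even (10 * t) := ⟨5 * t, by ring⟩
  rw [he8.neg_pow, he10.neg_pow] at htr
  have hN : (8 : ℕ) ^ (8 * t) + 4 ^ (8 * t) = 8 ^ (10 * t) + 2 ^ (10 * t) := by
    have h : ((8 ^ (8 * t) + 4 ^ (8 * t) : ℕ) : ℚ)
        = ((8 ^ (10 * t) + 2 ^ (10 * t) : ℕ) : ℚ) := by push_cast; exact htr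
    exact_mod_cast h
  have e1 : (8 : ℕ) ^ (8 * t) = 2 ^ (24 * t) := by
    rw [show (8 : ℕ) = 2 ^ 3 by norm_num, ← pow_mul]; congr 1; ring
  have e2 : (4 : ℕ) ^ (8 * t) = 2 ^ (16 * t) := by
    rw [show (4 : ℕ) = 2 ^ 2 by norm_num, ← pow_mul]; congr 1; ring
  have e3 : (8 : ℕ) ^ (10 * t) = 2 ^ (30 * t) := by
    rw [show (8 : ℕ) = 2 ^ 3 by norm_num, ← pow_mul]; congr 1; ring
  rw [e1, e2, e3] at hN
  -- contradiction: 2^(30t) alone exceeds the left side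
  have l1 : (2 : ℕ) ^ (16 * t) ≤ 2 ^ (24 * t) :=
    Nat.pow_le_pow_right (by norm_num) (by omega)
  have l2 : (2 : ℕ) ^ (24 * t) + 2 ^ (24 * t) ≤ 2 ^ (30 * t) := by
    have h : (2 : ℕ) ^ (24 * t) + 2 ^ (24 * t) = 2 ^ (24 * t + 1) := by ring
    rw [h]
    exact Nat.pow_le_pow_right (by norm_num) (by omega)
  have l3 : 0 < (2 : ℕ) ^ (10 * t) := Nat.pow_pos (by norm_num)
  linarith [hN, l1, l2, l3]
end

section
/- For no positive integers n and m is J^n similar over ℚ to K^m, where J and K are the 5×5 matrices with characteristic polynomials (t-2)(t⁴-3t³+4t²-2t+1) and (t-2)(t⁴+t³+1) respectively. -/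
/-!
Similar matrices have equal determinants and equal traces of all powers. Both matrices have
determinant `2`, so a similarity `J ^ n ∼ K ^ m` forces `n = m`, and then
`tr (J ^ (10 n)) = tr (K ^ (10 n))`. The eigenvalues of `J` are `2` and `1 + ζ` with `ζ ≠ 1` a fifth
root of unity, and `(1 + ζ) ^ 10 = φ ^ (± 10)` is real and positive (`φ` the golden ratio), so
`tr (J ^ (10 N)) - 1024 ^ N` solves `u (N + 2) = 123 u (N + 1) - u N` and grows like `61 ^ N`.
The roots of `t ^ 4 + t ^ 3 + 1` have modulus below `10 ^ (1 / 10)`, so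
`tr (K ^ (10 N)) - 1024 ^ N` solves a recurrence of order four and stays below `4 · 10 ^ N`.
-/

open Matrix Polynomial

namespace Matrix

variable {ι R S : Type*} [Fintype ι] [DecidableEq ι] [CommRing R] [CommRing S]

theorem trace_pow_conj {P : Matrix ι ι R} (hP : IsUnit P.det) (N : Matrix ι ι R) (k : ℕ) :
    trace ((P * N * P⁻¹) ^ k) = trace (N ^ k) := by
  have hPu : IsUnit P := (isUnit_iff_isUnit_det P).mpr hP
  rw [← hPu.unit_spec, ← coe_units_inv, Units.conj_pow, trace_units_conj]

theorem det_pow_eq_of_map_pow_eq_conj {f : R →+* S} (hf : Function.Injective f)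
    {A B : Matrix ι ι R} {P : Matrix ι ι S} {n m : ℕ} (hP : IsUnit P.det)
    (h : A.map f ^ n = P * B.map f ^ m * P⁻¹) : A.det ^ n = B.det ^ m := by
  apply hf
  have hPu : IsUnit P := (isUnit_iff_isUnit_det P).mpr hP
  rw [map_pow, map_pow, RingHom.map_det, RingHom.map_det, RingHom.mapMatrix_apply,
    RingHom.mapMatrix_apply, ← det_pow, ← det_pow, h, det_conj hPu]

theorem trace_pow_pow_eq_of_map_pow_eq_conj {f : R →+* S} (hf : Function.Injective f)
    {A B : Matrix ι ι R} {P : Matrix ι ι S} {n m : ℕ} (hP : IsUnit P.det)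
    (h : A.map f ^ n = P * B.map f ^ m * P⁻¹) (k : ℕ) :
    trace ((A ^ n) ^ k) = trace ((B ^ m) ^ k) := by
  apply hf
  rw [AddMonoidHom.map_trace f, AddMonoidHom.map_trace f]
  simp only [Matrix.map_pow, h, trace_pow_conj hP]

theorem pow_mul_eq_smul_of_mul_eq_smul {A Q : Matrix ι ι R} {c : R} (h : A * Q = c • Q)
    (N : ℕ) : A ^ N * Q = c ^ N • Q := by
  induction N with
  | zero => simp
  | succ N ih => rw [pow_succ, Matrix.mul_assoc, h, mul_smul_comm, ih, smul_smul, pow_succ']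

end Matrix

namespace LinearRecurrence

section CommRing

variable {R : Type*} [CommRing R] (E : LinearRecurrence R)

theorem aeval_charPoly {A : Type*} [Ring A] [Algebra R A] (x : A) :
    aeval x E.charPoly = x ^ E.order - ∑ i, E.coeffs i • x ^ (i : ℕ) := by
  simp [charPoly, aeval_monomial, Algebra.smul_def]

theorem eval_charPoly (c : R) :
    E.charPoly.eval c = c ^ E.order - ∑ i, E.coeffs i * c ^ (i : ℕ) := by
  simp [charPoly, eval_finsetSum]

/-- The hypotheses say that `c` is a simple eigenvalue of `A` and that the rest of the spectrum
consists of roots of `E.charPoly`. -/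
theorem isSolution_trace_pow_sub_pow {ι : Type*} [Fintype ι] [DecidableEq ι] {A : Matrix ι ι R}
    {c : R} (hA : A * aeval A E.charPoly = c • aeval A E.charPoly)
    (htr : trace (aeval A E.charPoly) = E.charPoly.eval c) :
    E.IsSolution fun N ↦ trace (A ^ N) - c ^ N := by
  intro N
  have key := congrArg trace (pow_mul_eq_smul_of_mul_eq_smul hA N)
  rw [trace_smul, htr, smul_eq_mul, aeval_charPoly, eval_charPoly] at key
  simp only [mul_sub, Finset.mul_sum, mul_smul_comm, trace_sub, trace_sum, trace_smul,
    smul_eq_mul, ← pow_add, mul_left_comm (c ^ N)] at key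
  simp only [mul_sub, Finset.sum_sub_distrib]
  linear_combination key

end CommRing

variable {R : Type*} [CommRing R] [LinearOrder R] [IsStrictOrderedRing R]

theorem abs_le_of_isSolution (E : LinearRecurrence R) {u : ℕ → R} (hu : E.IsSolution u)
    {C r : R} (hC : 0 ≤ C) (hr : 0 ≤ r) (hcoeffs : ∑ i, |E.coeffs i| * r ^ (i : ℕ) ≤ r ^ E.order)
    (hinit : ∀ i < E.order, |u i| ≤ C * r ^ i) (n : ℕ) : |u n| ≤ C * r ^ n := by
  induction n using Nat.strong_induction_on with
  | _ n ih =>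
    obtain hn | ⟨m, rfl⟩ : n < E.order ∨ ∃ m, n = m + E.order :=
      (lt_or_ge n E.order).imp_right fun h ↦ ⟨n - E.order, by omega⟩
    · exact hinit n hn
    calc |u (m + E.order)| = |∑ i, E.coeffs i * u (m + i)| := by rw [hu m]
      _ ≤ ∑ i, |E.coeffs i| * |u (m + i)| := by
          simpa only [abs_mul] using
            Finset.abs_sum_le_sum_abs (fun i ↦ E.coeffs i * u (m + i)) Finset.univ
      _ ≤ ∑ i, |E.coeffs i| * (C * r ^ (m + i)) := by
          gcongr with i
          exact ih _ (by omega)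
      _ = C * r ^ m * ∑ i, |E.coeffs i| * r ^ (i : ℕ) := by
          rw [Finset.mul_sum]; congr 1 with i; ring
      _ ≤ C * r ^ (m + E.order) := by
          rw [pow_add, mul_assoc]; gcongr

theorem pow_mul_le_of_isSolution {a r : R} {u : ℕ → R}
    (hu : (⟨2, ![-1, a]⟩ : LinearRecurrence R).IsSolution u) (hr : 1 ≤ r) (ha : r + 1 ≤ a)
    (h0 : 0 ≤ u 0) (h1 : r * u 0 ≤ u 1) (n : ℕ) : r ^ n * u 0 ≤ u n := by
  have hrec (n : ℕ) : u (n + 2) = a * u (n + 1) - u n := by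
    simpa [Fin.sum_univ_two, neg_add_eq_sub] using hu n
  have step (n : ℕ) : 0 ≤ u n ∧ r * u n ≤ u (n + 1) := by
    induction n with
    | zero => exact ⟨h0, h1⟩
    | succ n ih =>
      obtain ⟨hn, hrn⟩ := ih
      have hn1 : 0 ≤ u (n + 1) := by nlinarith
      exact ⟨hn1, by rw [hrec]; nlinarith⟩
  induction n with
  | zero => simp
  | succ n ih =>
    calc r ^ (n + 1) * u 0 = r * (r ^ n * u 0) := by ring
      _ ≤ r * u n := by gcongr
      _ ≤ u (n + 1) := (step n).2

end LinearRecurrence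

namespace NonSimilarPowers

def Jint : Matrix (Fin 5) (Fin 5) ℤ :=
  !![1,1,0,0,0; 0,1,1,0,0; 0,0,1,1,0; 0,0,0,1,1; 1,0,0,0,1]

def Kint : Matrix (Fin 5) (Fin 5) ℤ :=
  !![0,1,1,0,0; 0,0,1,1,0; 1,0,0,0,1; 1,1,0,0,0; 0,0,0,1,1]

/-- Its characteristic polynomial `t ^ 2 - 123 t + 1` has the roots `φ ^ (± 10)`. -/
abbrev recJ : LinearRecurrence ℤ := ⟨2, ![-1, 123]⟩

/-- Its characteristic polynomial `t ^ 4 - 6 t ^ 3 + 27 t ^ 2 + 10 t + 1` has as roots the tenth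
powers of the roots of `t ^ 4 + t ^ 3 + 1`. -/
abbrev recK : LinearRecurrence ℤ := ⟨4, ![-1, -10, -27, 6]⟩

theorem map_Jint :
    Jint.map (Int.castRingHom ℚ) =
      !![1,1,0,0,0; 0,1,1,0,0; 0,0,1,1,0; 0,0,0,1,1; 1,0,0,0,1] := by
  ext i j; fin_cases i <;> fin_cases j <;> rfl

theorem map_Kint :
    Kint.map (Int.castRingHom ℚ) =
      !![0,1,1,0,0; 0,0,1,1,0; 1,0,0,0,1; 1,1,0,0,0; 0,0,0,1,1] := by
  ext i j; fin_cases i <;> fin_cases j <;> rfl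

set_option maxRecDepth 10000 in
theorem det_Jint : Jint.det = 2 := by decide

set_option maxRecDepth 10000 in
theorem det_Kint : Kint.det = 2 := by decide

theorem isSolution_trace_Jint_pow :
    recJ.IsSolution fun N ↦ trace ((Jint ^ 10) ^ N) - 1024 ^ N := by
  apply recJ.isSolution_trace_pow_sub_pow <;>
    simp only [LinearRecurrence.aeval_charPoly, LinearRecurrence.eval_charPoly] <;> decide

theorem isSolution_trace_Kint_pow :
    recK.IsSolution fun N ↦ trace ((Kint ^ 10) ^ N) - 1024 ^ N := by
  apply recK.isSolution_trace_pow_sub_pow <;>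
    simp only [LinearRecurrence.aeval_charPoly, LinearRecurrence.eval_charPoly] <;> decide

theorem le_trace_Jint_pow (N : ℕ) : 1024 ^ N + 4 * 61 ^ N ≤ trace ((Jint ^ 10) ^ N) := by
  have h := LinearRecurrence.pow_mul_le_of_isSolution isSolution_trace_Jint_pow
    (r := 61) (by norm_num) (by norm_num) (by decide) (by decide) N
  have h0 : trace ((Jint ^ 10) ^ 0) - 1024 ^ 0 = 4 := by decide
  rw [h0] at h
  linarith

theorem trace_Kint_pow_le (N : ℕ) : trace ((Kint ^ 10) ^ N) ≤ 1024 ^ N + 4 * 10 ^ N := by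
  have h := recK.abs_le_of_isSolution isSolution_trace_Kint_pow (C := 4) (r := 10)
    (by norm_num) (by norm_num) (by decide) ?_ N
  · linarith [le_abs_self (trace ((Kint ^ 10) ^ N) - 1024 ^ N)]
  · intro i hi
    change i < 4 at hi
    interval_cases i <;> decide

theorem trace_Kint_pow_lt_trace_Jint_pow {N : ℕ} (hN : 0 < N) :
    trace ((Kint ^ N) ^ 10) < trace ((Jint ^ N) ^ 10) := by
  have h10 : (10 : ℤ) ^ N < 61 ^ N := pow_lt_pow_left₀ (by norm_num) (by norm_num) hN.ne'
  rw [← pow_mul, ← pow_mul, mul_comm, pow_mul, pow_mul]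
  linarith [le_trace_Jint_pow N, trace_Kint_pow_le N]

end NonSimilarPowers

open NonSimilarPowers

/-- No positive powers of the 5×5 matrices `J` and `K` are similar over `ℚ`. -/
theorem stmt12 :
    let J : Matrix (Fin 5) (Fin 5) ℚ :=
      !![1,1,0,0,0; 0,1,1,0,0; 0,0,1,1,0; 0,0,0,1,1; 1,0,0,0,1]
    let K : Matrix (Fin 5) (Fin 5) ℚ :=
      !![0,1,1,0,0; 0,0,1,1,0; 1,0,0,0,1; 1,1,0,0,0; 0,0,0,1,1]
    ¬ ∃ (n m : ℕ) (P : Matrix (Fin 5) (Fin 5) ℚ),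
        0 < n ∧ 0 < m ∧ IsUnit P.det ∧ J ^ n = P * K ^ m * P⁻¹ := by
  intro J K
  rintro ⟨n, m, P, hn, -, hP, hconj⟩
  simp only [J, K, ← map_Jint, ← map_Kint] at hconj
  have hdet := det_pow_eq_of_map_pow_eq_conj Int.cast_injective hP hconj
  rw [det_Jint, det_Kint] at hdet
  obtain rfl : n = m := pow_right_injective₀ (by norm_num) (by norm_num) hdet
  exact (trace_Kint_pow_lt_trace_Jint_pow hn).ne'
    (trace_pow_pow_eq_of_map_pow_eq_conj Int.cast_injective hP hconj 10)
end

section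
/- For no positive integers n, m are J₀^n and K₀^m similar over ℂ, where J₀ has characteristic polynomial (t³-t-1)(t³+1) and K₀ has characteristic polynomial (t³-t-1)(t³+t+1). -/
open Matrix

lemma cv5' {α : Type*} (x : α) (u : Fin 5 → α) : vecCons x u 5 = u 4 := rfl
lemma cv4' {α : Type*} (x : α) (u : Fin 4 → α) : vecCons x u 4 = u 3 := rfl
lemma cv3' {α : Type*} (x : α) (u : Fin 3 → α) : vecCons x u 3 = u 2 := rfl
lemma cv2' {α : Type*} (x : α) (u : Fin 2 → α) : vecCons x u 2 = u 1 := rfl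

set_option maxHeartbeats 1000000 in
set_option maxRecDepth 8000 in
lemma detK (c : ℂ) :
    det (c • (1 : Matrix (Fin 6) (Fin 6) ℂ) -
      !![0,1,0,0,0,0; 0,0,1,0,0,0; 0,0,0,1,0,0; 1,0,0,0,1,0; 2,0,0,0,0,1; 1,0,0,0,0,0]) =
    (c^3 - c - 1) * (c^3 + c + 1) := by
  have h : c • (1 : Matrix (Fin 6) (Fin 6) ℂ) -
      !![0,1,0,0,0,0; 0,0,1,0,0,0; 0,0,0,1,0,0; 1,0,0,0,1,0; 2,0,0,0,0,1; 1,0,0,0,0,0] =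
      !![c,-1,0,0,0,0; 0,c,-1,0,0,0; 0,0,c,-1,0,0; -1,0,0,c,-1,0; -2,0,0,0,c,-1; -1,0,0,0,0,c] := by
    funext i j
    fin_cases i <;> fin_cases j <;>
      simp [Matrix.one_apply, cv2', cv3', cv4', cv5', Matrix.vecHead, Matrix.vecTail, Function.comp]
  rw [h]
  simp [det_succ_row_zero, Fin.sum_univ_succ, Fin.succAbove]
  ring

lemma root1 (z : ℂ) (hnorm : z.re * z.re + z.im * z.im = 1) (h : z^3 - z - 1 = 0) : False := by
  have hre := congrArg Complex.re h
  have him := congrArg Complex.im h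
  simp [pow_succ, Complex.mul_re, Complex.mul_im, Complex.sub_re, Complex.sub_im,
    Complex.one_re, Complex.one_im] at hre him
  set a := z.re; set b := z.im
  have h' : b * (3*(a*a) - b*b - 1) = 0 := by linear_combination him
  rcases mul_eq_zero.mp h' with hb0 | hb
  · rw [hb0] at hre hnorm
    rcases mul_self_eq_one_iff.mp (by linarith : a * a = 1) with ha | ha <;>
      rw [ha] at hre <;> norm_num at hre
  · have ha2 : a * a = 1/2 := by linarith
    have hb2 : b * b = 1/2 := by linarith
    have ha : a = -1/2 := by
      linear_combination (-1/2)*hre + (a/2)*ha2 - (3*a/2)*hb2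
    rw [ha] at ha2; norm_num at ha2

lemma root2 (z : ℂ) (hnorm : z.re * z.re + z.im * z.im = 1) (h : z^3 + z + 1 = 0) : False := by
  have hre := congrArg Complex.re h
  have him := congrArg Complex.im h
  simp [pow_succ, Complex.mul_re, Complex.mul_im, Complex.add_re, Complex.add_im,
    Complex.one_re, Complex.one_im] at hre him
  set a := z.re; set b := z.im
  have h' : b * (3*(a*a) - b*b + 1) = 0 := by linear_combination him
  rcases mul_eq_zero.mp h' with hb0 | hb
  · rw [hb0] at hre hnorm
    rcases mul_self_eq_one_iff.mp (by linarith : a * a = 1) with ha | ha <;>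
      rw [ha] at hre <;> norm_num at hre
  · have ha : a = 0 := mul_self_eq_zero.mp (by linarith)
    rw [ha] at hre
    norm_num at hre

set_option maxHeartbeats 1000000 in
set_option maxRecDepth 8000 in
/-- No positive powers of the 6×6 matrices `J₀` and `K₀` are similar over `ℂ`. -/
theorem stmt16 :
    let J₀ : Matrix (Fin 6) (Fin 6) ℂ :=
      !![0,1,0,0,0,0; 1,0,1,0,0,0; 0,0,0,1,0,0; 0,0,0,0,1,0; 1,0,0,0,0,1; 1,0,0,0,0,0]
    let K₀ : Matrix (Fin 6) (Fin 6) ℂ :=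
      !![0,1,0,0,0,0; 0,0,1,0,0,0; 0,0,0,1,0,0; 1,0,0,0,1,0; 2,0,0,0,0,1; 1,0,0,0,0,0]
    ¬ ∃ (n m : ℕ) (P : Matrix (Fin 6) (Fin 6) ℂ),
        0 < n ∧ 0 < m ∧ IsUnit P.det ∧ J₀ ^ n = P * K₀ ^ m * P⁻¹ := by
  intro J₀ K₀
  rintro ⟨n, m, P, hn, hm, hP, hsim⟩
  -- v is an eigenvector of J₀ with eigenvalue -1
  set v : Fin 6 → ℂ := ![1, -1, 0, 0, 0, -1] with hv
  have hv0 : v ≠ 0 := by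
    intro h
    have := congrFun h 0
    simp [hv] at this
  have hJv : J₀ *ᵥ v = (-1 : ℂ) • v := by
    funext i
    fin_cases i <;>
      simp [J₀, hv, Matrix.mulVec, dotProduct, Fin.sum_univ_six,
        cv2', cv3', cv4', cv5']
  have hJn : ∀ k : ℕ, (J₀ ^ k) *ᵥ v = ((-1 : ℂ) ^ k) • v := by
    intro k
    induction k with
    | zero => simp
    | succ k ih =>
      rw [pow_succ, ← Matrix.mulVec_mulVec, hJv, Matrix.mulVec_smul, ih, smul_smul, ← pow_succ']
  -- transfer to K₀
  have hPinv : P * P⁻¹ = 1 := Matrix.mul_nonsing_inv P hP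
  have hinvP : P⁻¹ * P = 1 := Matrix.nonsing_inv_mul P hP
  set w : Fin 6 → ℂ := P⁻¹ *ᵥ v with hw
  have hvw : P *ᵥ w = v := by
    rw [hw, Matrix.mulVec_mulVec, hPinv, Matrix.one_mulVec]
  have hw0 : w ≠ 0 := by
    intro h
    apply hv0
    rw [← hvw, h, Matrix.mulVec_zero]
  have hK : K₀ ^ m = P⁻¹ * J₀ ^ n * P := by
    rw [hsim]
    simp only [Matrix.mul_assoc]
    rw [hinvP, Matrix.mul_one, ← Matrix.mul_assoc, hinvP, Matrix.one_mul]
  have hKw : (K₀ ^ m) *ᵥ w = ((-1 : ℂ) ^ n) • w := by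
    rw [hK, ← Matrix.mulVec_mulVec, ← Matrix.mulVec_mulVec, hvw, hJn, Matrix.mulVec_smul]
  -- (-1)^n is in the spectrum of K₀^m
  have hmem : ((-1 : ℂ) ^ n) ∈ spectrum ℂ (K₀ ^ m) := by
    rw [spectrum.mem_iff]
    intro hU
    rw [Matrix.isUnit_iff_isUnit_det, isUnit_iff_ne_zero] at hU
    apply hU
    rw [← Matrix.exists_mulVec_eq_zero_iff]
    refine ⟨w, hw0, ?_⟩
    rw [Matrix.sub_mulVec, hKw, Algebra.algebraMap_eq_smul_one, Matrix.smul_mulVec,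
      Matrix.one_mulVec, sub_self]
  -- spectral mapping
  rw [spectrum.map_pow_of_pos K₀ hm] at hmem
  obtain ⟨lam, hlam, hlampow⟩ := hmem
  -- lam is a root of the characteristic polynomial of K₀
  rw [spectrum.mem_iff] at hlam
  have hdet : ((lam : ℂ)^3 - lam - 1) * (lam^3 + lam + 1) = 0 := by
    rw [← detK lam]
    by_contra hd
    apply hlam
    rw [Matrix.isUnit_iff_isUnit_det, isUnit_iff_ne_zero, Algebra.algebraMap_eq_smul_one]
    exact hd
  -- |lam| = 1
  have habs : ‖lam‖ = 1 := by
    have h1 : ‖lam‖ ^ m = 1 := by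
      have := congrArg norm hlampow
      simpa [map_pow] using this
    exact (pow_left_inj₀ (norm_nonneg lam) zero_le_one hm.ne').mp (by simpa using h1)
  have hnorm : lam.re * lam.re + lam.im * lam.im = 1 := by
    have h2 := Complex.sq_norm lam
    rw [habs, one_pow] at h2
    rw [Complex.normSq_apply] at h2
    linarith [h2]
  rcases mul_eq_zero.mp hdet with h | h
  · exact root1 lam hnorm h
  · exact root2 lam hnorm h
end

section
/- The 1×1 matrices [6] and [12] are C*-equivalent: there exist sequences of positive integers n(i), m(i) and positive integers A(i), B(i) such that 6^{n(i)} = B(i)·A(i) and 12^{m(i)} = A(i+1)·B(i) for all i ≥ 1; but no powers 6^n and 12^m are equal for positive n, m. -/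
lemma fact12 : (12:ℕ).factorization 2 = 2 ∧ (12:ℕ).factorization 3 = 1 := by
  rw [show (12:ℕ) = 2^2*3 by norm_num,
    Nat.factorization_mul (by norm_num) (by norm_num), Nat.factorization_pow,
    Nat.Prime.factorization (by norm_num), Nat.Prime.factorization (by norm_num)]
  simp [Finsupp.single_apply]

lemma fact6 : (6:ℕ).factorization 2 = 1 ∧ (6:ℕ).factorization 3 = 1 := by
  rw [show (6:ℕ) = 2*3 by norm_num,
    Nat.factorization_mul (by norm_num) (by norm_num),
    Nat.Prime.factorization (by norm_num), Nat.Prime.factorization (by norm_num)]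
  simp [Finsupp.single_apply]

/-- The 1×1 matrices `[6]` and `[12]` are C*-equivalent: there are sequences
of positive integers `n i`, `m i`, `A i`, `B i` with `6^(n i) = B i * A i` and
`12^(m i) = A (i+1) * B i` for all `i`; but `6^n = 12^m` is impossible for
positive `n`, `m`. -/
theorem stmt18 :
    (∃ n m A B : ℕ → ℕ,
      (∀ i, 0 < n i ∧ 0 < m i ∧ 0 < A i ∧ 0 < B i) ∧
      (∀ i, 6 ^ n i = B i * A i ∧ 12 ^ m i = A (i + 1) * B i)) ∧
    ¬ ∃ n m : ℕ, 0 < n ∧ 0 < m ∧ 6 ^ n = 12 ^ m := by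
  constructor
  · refine ⟨fun i => 2 ^ i, fun i => 2 ^ i, fun i => 2 ^ (2 ^ i), fun i => 3 ^ (2 ^ i), ?_, ?_⟩
    · intro i
      exact ⟨Nat.pow_pos (by norm_num), Nat.pow_pos (by norm_num),
        Nat.pow_pos (by norm_num), Nat.pow_pos (by norm_num)⟩
    · intro i
      constructor
      · show (6:ℕ) ^ 2 ^ i = 3 ^ 2 ^ i * 2 ^ 2 ^ i
        rw [← Nat.mul_pow]
      · show (12:ℕ) ^ 2 ^ i = 2 ^ 2 ^ (i + 1) * 3 ^ 2 ^ i
        rw [show 2 ^ (i+1) = 2 ^ i * 2 from pow_succ 2 i, pow_mul,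
          show ((2:ℕ) ^ 2 ^ i) ^ 2 = 4 ^ 2 ^ i by rw [← pow_mul, mul_comm, pow_mul]; norm_num,
          ← Nat.mul_pow]
  · rintro ⟨n, m, hn, hm, h⟩
    have h2 : (6 ^ n : ℕ).factorization 2 = (12 ^ m : ℕ).factorization 2 := by rw [h]
    have h3 : (6 ^ n : ℕ).factorization 3 = (12 ^ m : ℕ).factorization 3 := by rw [h]
    rw [Nat.factorization_pow, Nat.factorization_pow] at h2 h3
    simp only [Finsupp.smul_apply, smul_eq_mul, fact6.1, fact12.1] at h2
    simp only [Finsupp.smul_apply, smul_eq_mul, fact6.2, fact12.2] at h3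
    omega
end

section
/- Let J and K be primitive nonsingular nonnegative square matrices of the same size with the same Perron eigenvalue λ₁ and the same left and right Perron eigenvectors. Then there exists a positive integer c such that J^{cn}K^{-n} is a nonnegative (real) matrix for all sufficiently large n. -/
open Matrix Finset


lemma rowsum_one_mul {d : ℕ} {A B : Matrix (Fin d) (Fin d) ℝ}
    (hA : ∀ i, ∑ j, A i j = 1) (hB : ∀ i, ∑ j, B i j = 1) (i : Fin d) :
    ∑ j, (A * B) i j = 1 := by
  simp only [Matrix.mul_apply]
  rw [Finset.sum_comm]
  simp [← Finset.mul_sum, hB, hA i]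

lemma entry_pow_bound {d : ℕ} (A : Matrix (Fin d) (Fin d) ℝ) (a : ℝ) (ha0 : 0 ≤ a)
    (ha : ∀ i j, |A i j| ≤ a) : ∀ n i j, |(A ^ n) i j| ≤ ((d : ℝ) * a) ^ n := by
  intro n
  induction n with
  | zero =>
    intro i j
    simp only [pow_zero, Matrix.one_apply]
    split <;> simp
  | succ n ih =>
    intro i j
    rw [pow_succ, Matrix.mul_apply]
    have hda : (0:ℝ) ≤ (d:ℝ) * a := mul_nonneg (Nat.cast_nonneg d) ha0
    calc |∑ k, (A ^ n) i k * A k j| ≤ ∑ k, |(A ^ n) i k * A k j| :=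
          Finset.abs_sum_le_sum_abs _ _
      _ ≤ ∑ _k : Fin d, ((d:ℝ) * a) ^ n * a := by
          refine Finset.sum_le_sum fun k _ => ?_
          rw [abs_mul]
          exact mul_le_mul (ih i k) (ha k j) (abs_nonneg _) (pow_nonneg hda n)
      _ = (d:ℝ) * (((d:ℝ) * a) ^ n * a) := by
          rw [Finset.sum_const, Finset.card_univ, Fintype.card_fin, nsmul_eq_mul]
      _ = ((d:ℝ) * a) ^ (n + 1) := by ring

lemma doeblin_step {d : ℕ} (C M : Matrix (Fin d) (Fin d) ℝ) (ε a b : ℝ) (j : Fin d)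
    (hC : ∀ i k, ε ≤ C i k) (hCr : ∀ i, ∑ k, C i k = 1)
    (hM : ∀ k, a ≤ M k j ∧ M k j ≤ b) (i i' : Fin d) :
    (C * M) i j - (C * M) i' j ≤ (1 - (d:ℝ) * ε) * (b - a) := by
  have key : ∀ i, (C * M) i j = (∑ k, (C i k - ε) * M k j) + ε * ∑ k, M k j := by
    intro i
    rw [Matrix.mul_apply, Finset.mul_sum, ← Finset.sum_add_distrib]
    exact Finset.sum_congr rfl fun k _ => by ring
  have hsub : ∀ i, ∑ k, (C i k - ε) = 1 - (d:ℝ) * ε := by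
    intro i
    rw [Finset.sum_sub_distrib, hCr, Finset.sum_const, Finset.card_univ, Fintype.card_fin,
      nsmul_eq_mul]
  have hup : ∀ i, ∑ k, (C i k - ε) * M k j ≤ (1 - (d:ℝ) * ε) * b := by
    intro i
    calc ∑ k, (C i k - ε) * M k j ≤ ∑ k, (C i k - ε) * b :=
          Finset.sum_le_sum fun k _ =>
            mul_le_mul_of_nonneg_left (hM k).2 (by linarith [hC i k])
      _ = (1 - (d:ℝ) * ε) * b := by rw [← Finset.sum_mul, hsub]
  have hlo : ∀ i, (1 - (d:ℝ) * ε) * a ≤ ∑ k, (C i k - ε) * M k j := by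
    intro i
    calc (1 - (d:ℝ) * ε) * a = ∑ k, (C i k - ε) * a := by rw [← Finset.sum_mul, hsub]
      _ ≤ ∑ k, (C i k - ε) * M k j :=
          Finset.sum_le_sum fun k _ =>
            mul_le_mul_of_nonneg_left (hM k).1 (by linarith [hC i k])
  rw [key i, key i']
  have h1 := hup i
  have h2 := hlo i'
  nlinarith

/-- Lemma 1: if `J`, `K` are primitive, nonsingular, nonnegative square real
matrices with the same Perron eigenvalue and the same (positive) left and
right Perron eigenvectors, then there is a positive integer `c` such that
`J^(cn) K^(-n)` is entrywise nonnegative for all sufficiently large `n`. -/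
theorem stmt19 {d : ℕ} (J K : Matrix (Fin d) (Fin d) ℝ)
    (hJ0 : ∀ i j, 0 ≤ J i j) (hK0 : ∀ i j, 0 ≤ K i j)
    (hJprim : ∃ p : ℕ, ∀ i j, 0 < (J ^ p) i j)
    (hKprim : ∃ p : ℕ, ∀ i j, 0 < (K ^ p) i j)
    (hJns : IsUnit J.det) (hKns : IsUnit K.det)
    (lam : ℝ) (v w : Fin d → ℝ) (hlam : 0 < lam)
    (hv : ∀ i, 0 < v i) (hw : ∀ i, 0 < w i)
    (hvJ : v ᵥ* J = lam • v) (hJw : J *ᵥ w = lam • w)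
    (hvK : v ᵥ* K = lam • v) (hKw : K *ᵥ w = lam • w) :
    ∃ c : ℕ, 0 < c ∧ ∃ N : ℕ, ∀ n ≥ N,
      ∀ i j, 0 ≤ (J ^ (c * n) * K⁻¹ ^ n) i j := by
  rcases Nat.eq_zero_or_pos d with hd0 | hd
  · exact ⟨1, one_pos, 0, fun n _ i j => absurd i.isLt (by omega)⟩
  haveI hne : Nonempty (Fin d) := ⟨⟨0, hd⟩⟩
  have hlam0 : lam ≠ 0 := ne_of_gt hlam
  have hw0 : ∀ i, w i ≠ 0 := fun i => ne_of_gt (hw i)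
  -- row of J nonzero
  have hrowJ : ∀ i, ∃ k, 0 < J i k := by
    intro i
    by_contra h
    push_neg at h
    have hz : ∀ k, J i k = 0 := fun k => le_antisymm (h k) (hJ0 i k)
    have h1 : (J *ᵥ w) i = 0 := by simp [Matrix.mulVec, dotProduct, hz]
    rw [hJw] at h1
    simp only [Pi.smul_apply, smul_eq_mul] at h1
    nlinarith [hw i]
  obtain ⟨p₀, hp₀⟩ := hJprim
  have hJp : ∀ i j, 0 < (J ^ (p₀ + 1)) i j := by
    intro i j
    rw [pow_succ', Matrix.mul_apply]
    obtain ⟨k, hk⟩ := hrowJ i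
    have hterm : 0 < J i k * (J ^ p₀) k j := mul_pos hk (hp₀ k j)
    exact lt_of_lt_of_le hterm
      (Finset.single_le_sum (fun k _ => mul_nonneg (hJ0 i k) (le_of_lt (hp₀ k j)))
        (Finset.mem_univ k))
  set p := p₀ + 1 with hpdef
  -- B
  set B : Matrix (Fin d) (Fin d) ℝ :=
    Matrix.of (fun i j => J i j * w j / (lam * w i)) with hBdef
  have powB : ∀ m i j, (B ^ m) i j = (J ^ m) i j * w j / (lam ^ m * w i) := by
    intro m
    induction m with
    | zero =>
      intro i j
      by_cases h : i = j <;> simp [Matrix.one_apply, h]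
      rw [div_self (hw0 j)]
    | succ m ih =>
      intro i j
      rw [pow_succ, pow_succ, Matrix.mul_apply, Matrix.mul_apply,
        Finset.sum_mul, Finset.sum_div]
      refine Finset.sum_congr rfl fun k _ => ?_
      rw [ih]
      simp only [hBdef, Matrix.of_apply]
      rw [div_mul_div_comm, div_eq_div_iff
        (ne_of_gt (mul_pos (mul_pos (pow_pos hlam m) (hw i)) (mul_pos hlam (hw k))))
        (ne_of_gt (mul_pos (pow_pos hlam (m + 1)) (hw i)))]
      ring
  have hB0 : ∀ i j, 0 ≤ B i j := fun i j =>
    div_nonneg (mul_nonneg (hJ0 i j) (le_of_lt (hw j)))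
      (le_of_lt (mul_pos hlam (hw i)))
  have hJwi : ∀ i, ∑ j, J i j * w j = lam * w i := by
    intro i
    have := congrFun hJw i
    simpa [Matrix.mulVec, dotProduct] using this
  have hBrow : ∀ i, ∑ j, B i j = 1 := by
    intro i
    simp only [hBdef, Matrix.of_apply]
    rw [← Finset.sum_div, hJwi, div_self (ne_of_gt (mul_pos hlam (hw i)))]
  -- powers of B
  have hBmrow : ∀ m i, ∑ j, (B ^ m) i j = 1 := by
    intro m
    induction m with
    | zero => intro i; simp [Matrix.one_apply]
    | succ m ih =>
      intro i
      rw [pow_succ]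
      exact rowsum_one_mul ih hBrow i
  have hBm0 : ∀ m i j, 0 ≤ (B ^ m) i j := by
    intro m
    induction m with
    | zero =>
      intro i j
      rw [pow_zero, Matrix.one_apply]
      split <;> norm_num
    | succ m ih =>
      intro i j
      rw [pow_succ, Matrix.mul_apply]
      exact Finset.sum_nonneg fun k _ => mul_nonneg (ih i k) (hB0 k j)
  have hBppos : ∀ i j, 0 < (B ^ p) i j := by
    intro i j
    rw [powB]
    exact div_pos (mul_pos (hJp i j) (hw j)) (mul_pos (pow_pos hlam p) (hw i))
  -- pi
  set s : ℝ := ∑ k, v k * w k with hsdef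
  have hs : 0 < s :=
    Finset.sum_pos (fun k _ => mul_pos (hv k) (hw k)) Finset.univ_nonempty
  set piv : Fin d → ℝ := fun k => v k * w k / s with hpivdef
  have hpiv0 : ∀ k, 0 ≤ piv k := fun k =>
    div_nonneg (le_of_lt (mul_pos (hv k) (hw k))) (le_of_lt hs)
  have hpivsum : ∑ k, piv k = 1 := by
    simp only [hpivdef]
    rw [← Finset.sum_div, ← hsdef, div_self (ne_of_gt hs)]
  have hvJj : ∀ j, ∑ i, v i * J i j = lam * v j := by
    intro j
    have := congrFun hvJ j
    simpa [Matrix.vecMul, dotProduct] using this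
  have hpivB : ∀ j, ∑ i, piv i * B i j = piv j := by
    intro j
    have step : ∀ i, piv i * B i j = (v i * J i j) * (w j / (s * lam)) := by
      intro i
      simp only [hpivdef, hBdef, Matrix.of_apply]
      rw [div_mul_div_comm, ← mul_div_assoc, div_eq_div_iff
        (ne_of_gt (mul_pos hs (mul_pos hlam (hw i))))
        (ne_of_gt (mul_pos hs hlam))]
      ring
    rw [Finset.sum_congr rfl fun i _ => step i, ← Finset.sum_mul, hvJj]
    simp only [hpivdef]
    field_simp
  have hpivBm : ∀ m j, ∑ i, piv i * (B ^ m) i j = piv j := by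
    intro m
    induction m with
    | zero =>
      intro j
      simp [Matrix.one_apply]
    | succ m ih =>
      intro j
      rw [pow_succ]
      simp only [Matrix.mul_apply, Finset.mul_sum]
      rw [Finset.sum_comm]
      have inner : ∀ k, ∑ i, piv i * ((B ^ m) i k * B k j) = piv k * B k j := by
        intro k
        have e : ∑ i, piv i * ((B ^ m) i k * B k j)
            = ∑ i, (piv i * (B ^ m) i k) * B k j :=
          Finset.sum_congr rfl fun i _ => by ring
        rw [e, ← Finset.sum_mul, ih k]
      rw [Finset.sum_congr rfl fun k _ => inner k]
      exact hpivB j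
  -- epsilon and theta
  set eps : ℝ := Finset.univ.inf' Finset.univ_nonempty
    (fun i => Finset.univ.inf' Finset.univ_nonempty fun j => (B ^ p) i j) with hepsdef
  have heps_le : ∀ i j, eps ≤ (B ^ p) i j := by
    intro i j
    exact le_trans (Finset.inf'_le _ (Finset.mem_univ i))
      (Finset.inf'_le _ (Finset.mem_univ j))
  have heps : 0 < eps := by
    rw [hepsdef, Finset.lt_inf'_iff]
    intro i _
    rw [Finset.lt_inf'_iff]
    intro j _
    exact hBppos i j
  set th : ℝ := 1 - (d : ℝ) * eps with hthdef
  have hth0 : 0 ≤ th := by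
    have i0 : Fin d := Classical.arbitrary _
    have h1 : (d : ℝ) * eps ≤ ∑ j, (B ^ p) i0 j := by
      calc (d : ℝ) * eps = ∑ _j : Fin d, eps := by
            rw [Finset.sum_const, Finset.card_univ, Fintype.card_fin, nsmul_eq_mul]
        _ ≤ ∑ j, (B ^ p) i0 j := Finset.sum_le_sum fun j _ => heps_le i0 j
    rw [hBmrow p i0] at h1
    simp only [hthdef]
    linarith
  have hth1 : th < 1 := by
    simp only [hthdef]
    have : (0:ℝ) < (d:ℝ) * eps := mul_pos (by exact_mod_cast hd) heps
    linarith
  -- oscillation bound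
  have hosc : ∀ n j,
      (Finset.univ.sup' Finset.univ_nonempty fun i => (B ^ (p * n)) i j)
        - (Finset.univ.inf' Finset.univ_nonempty fun i => (B ^ (p * n)) i j) ≤ th ^ n := by
    intro n
    induction n with
    | zero =>
      intro j
      simp only [Nat.mul_zero, pow_zero]
      have h1 : (Finset.univ.sup' Finset.univ_nonempty
          fun i => (1 : Matrix (Fin d) (Fin d) ℝ) i j) ≤ 1 := by
        apply Finset.sup'_le
        intro i _
        rw [Matrix.one_apply]
        split <;> norm_num
      have h2 : (0:ℝ) ≤ Finset.univ.inf' Finset.univ_nonempty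
          fun i => (1 : Matrix (Fin d) (Fin d) ℝ) i j := by
        apply Finset.le_inf'
        intro i _
        rw [Matrix.one_apply]
        split <;> norm_num
      linarith
    | succ n ih =>
      intro j
      have hsplit : B ^ (p * (n + 1)) = B ^ p * B ^ (p * n) := by
        rw [← pow_add]
        ring_nf
      obtain ⟨i1, _, hi1⟩ := Finset.exists_mem_eq_sup' (Finset.univ_nonempty (α := Fin d))
        (fun i => (B ^ (p * (n+1))) i j)
      obtain ⟨i2, _, hi2⟩ := Finset.exists_mem_eq_inf' (Finset.univ_nonempty (α := Fin d))
        (fun i => (B ^ (p * (n+1))) i j)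
      rw [hi1, hi2]
      have hstep := doeblin_step (B ^ p) (B ^ (p * n)) eps
        (Finset.univ.inf' Finset.univ_nonempty fun i => (B ^ (p * n)) i j)
        (Finset.univ.sup' Finset.univ_nonempty fun i => (B ^ (p * n)) i j) j
        heps_le (hBmrow p)
        (fun k => ⟨Finset.inf'_le _ (Finset.mem_univ k), Finset.le_sup' (fun i => (B ^ (p * n)) i j) (Finset.mem_univ k)⟩)
        i1 i2
      rw [← hsplit] at hstep
      calc (B ^ (p * (n+1))) i1 j - (B ^ (p * (n+1))) i2 j
          ≤ (1 - (d:ℝ) * eps) * ((Finset.univ.sup' Finset.univ_nonempty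
              fun i => (B ^ (p * n)) i j)
            - Finset.univ.inf' Finset.univ_nonempty fun i => (B ^ (p * n)) i j) := hstep
        _ ≤ th * th ^ n := by
            rw [← hthdef]
            exact mul_le_mul_of_nonneg_left (ih j) hth0
        _ = th ^ (n + 1) := (pow_succ' th n).symm
  -- sandwich
  have hsand : ∀ m j,
      (Finset.univ.inf' Finset.univ_nonempty fun i => (B ^ m) i j) ≤ piv j ∧
      piv j ≤ Finset.univ.sup' Finset.univ_nonempty fun i => (B ^ m) i j := by
    intro m j
    constructor
    · calc (Finset.univ.inf' Finset.univ_nonempty fun i => (B ^ m) i j)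
          = ∑ i, piv i * (Finset.univ.inf' Finset.univ_nonempty fun i => (B ^ m) i j) := by
            rw [← Finset.sum_mul, hpivsum, one_mul]
        _ ≤ ∑ i, piv i * (B ^ m) i j :=
            Finset.sum_le_sum fun i _ => mul_le_mul_of_nonneg_left
              (Finset.inf'_le _ (Finset.mem_univ i)) (hpiv0 i)
        _ = piv j := hpivBm m j
    · calc piv j = ∑ i, piv i * (B ^ m) i j := (hpivBm m j).symm
        _ ≤ ∑ i, piv i * (Finset.univ.sup' Finset.univ_nonempty fun i => (B ^ m) i j) :=
            Finset.sum_le_sum fun i _ => mul_le_mul_of_nonneg_left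
              (Finset.le_sup' (fun i => (B ^ m) i j) (Finset.mem_univ i)) (hpiv0 i)
        _ = Finset.univ.sup' Finset.univ_nonempty fun i => (B ^ m) i j := by
            rw [← Finset.sum_mul, hpivsum, one_mul]
  have hBpi : ∀ n i j, |(B ^ (p * n)) i j - piv j| ≤ th ^ n := by
    intro n i j
    have h1 := (hsand (p * n) j).1
    have h2 := (hsand (p * n) j).2
    have h3 : (Finset.univ.inf' Finset.univ_nonempty fun i => (B ^ (p*n)) i j)
        ≤ (B ^ (p*n)) i j := Finset.inf'_le _ (Finset.mem_univ i)
    have h4 : (B ^ (p*n)) i j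
        ≤ Finset.univ.sup' Finset.univ_nonempty fun i => (B ^ (p*n)) i j :=
      Finset.le_sup' (fun i => (B ^ (p*n)) i j) (Finset.mem_univ i)
    have h5 := hosc n j
    rw [abs_sub_le_iff]
    constructor <;> linarith
  -- K side
  have hKinv : v ᵥ* K⁻¹ = lam⁻¹ • v := by
    have h1 : v ᵥ* K ᵥ* K⁻¹ = v ᵥ* (K * K⁻¹) := Matrix.vecMul_vecMul v K K⁻¹
    rw [Matrix.mul_nonsing_inv K hKns, Matrix.vecMul_one, hvK] at h1
    have h2 : lam • (v ᵥ* K⁻¹) = v := by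
      rw [← Matrix.smul_vecMul, h1]
    funext j
    have := congrFun h2 j
    simp only [Pi.smul_apply, smul_eq_mul] at this ⊢
    rw [← this, inv_mul_cancel_left₀ hlam0]
  have hKinvn : ∀ n, v ᵥ* (K⁻¹ ^ n) = (lam⁻¹ ^ n) • v := by
    intro n
    induction n with
    | zero => simp
    | succ n ih =>
      rw [pow_succ, ← Matrix.vecMul_vecMul, ih, Matrix.smul_vecMul, hKinv,
        smul_smul, pow_succ]
  have hvA : ∀ n j, ∑ k, v k * (K⁻¹ ^ n) k j = lam⁻¹ ^ n * v j := by
    intro n j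
    have := congrFun (hKinvn n) j
    simpa [Matrix.vecMul, dotProduct] using this
  -- bound on entries of K⁻¹ ^ n
  set aK : ℝ := Finset.univ.sup' Finset.univ_nonempty
    (fun i => Finset.univ.sup' Finset.univ_nonempty fun j => |K⁻¹ i j|) with haKdef
  have haK : ∀ i j, |K⁻¹ i j| ≤ aK :=
    fun i j => le_trans (Finset.le_sup' (fun j => |K⁻¹ i j|) (Finset.mem_univ j))
      (Finset.le_sup' (fun i => Finset.univ.sup' Finset.univ_nonempty fun j => |K⁻¹ i j|)
        (Finset.mem_univ i))
  have haK0 : 0 ≤ aK := by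
    have i0 : Fin d := Classical.arbitrary _
    exact le_trans (abs_nonneg _) (haK i0 i0)
  set mu : ℝ := (d : ℝ) * aK with hmudef
  have hmu0 : 0 ≤ mu := mul_nonneg (Nat.cast_nonneg d) haK0
  have hApow : ∀ n k j, |(K⁻¹ ^ n) k j| ≤ mu ^ n := fun n k j =>
    entry_pow_bound K⁻¹ aK haK0 haK n k j
  -- choose m
  have hml1 : (0:ℝ) < (mu * lam + 1)⁻¹ := by positivity
  obtain ⟨m₀, hm₀⟩ := exists_pow_lt_of_lt_one hml1 hth1
  set m : ℕ := m₀ + 1 with hmdef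
  set b : ℝ := th ^ m * (mu * lam) with hbdef
  have hmulam : 0 ≤ mu * lam := mul_nonneg hmu0 (le_of_lt hlam)
  have hb0 : 0 ≤ b := mul_nonneg (pow_nonneg hth0 m) hmulam
  have hb1 : b < 1 := by
    have h1 : th ^ m ≤ th ^ m₀ := by
      rw [hmdef, pow_succ]
      nlinarith [pow_nonneg hth0 m₀]
    have h2 : b ≤ (mu * lam + 1)⁻¹ * (mu * lam) := by
      calc b ≤ th ^ m₀ * (mu * lam) := mul_le_mul_of_nonneg_right h1 hmulam
        _ ≤ (mu * lam + 1)⁻¹ * (mu * lam) :=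
            mul_le_mul_of_nonneg_right (le_of_lt hm₀) hmulam
    have h3 : (mu * lam + 1)⁻¹ * (mu * lam) < 1 := by
      rw [← div_eq_inv_mul, div_lt_one (by linarith)]
      linarith
    linarith
  -- choose N
  set vmin : ℝ := Finset.univ.inf' Finset.univ_nonempty v with hvmindef
  set wmin : ℝ := Finset.univ.inf' Finset.univ_nonempty w with hwmindef
  have hvmin : 0 < vmin := by
    rw [hvmindef, Finset.lt_inf'_iff]; exact fun i _ => hv i
  have hwmin : 0 < wmin := by
    rw [hwmindef, Finset.lt_inf'_iff]; exact fun i _ => hw i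
  have hvminle : ∀ j, vmin ≤ v j := fun j => Finset.inf'_le _ (Finset.mem_univ j)
  have hwminle : ∀ k, wmin ≤ w k := fun k => Finset.inf'_le _ (Finset.mem_univ k)
  have htend : Filter.Tendsto (fun n : ℕ => s * (d:ℝ) * b ^ n)
      Filter.atTop (nhds 0) := by
    have h1 := tendsto_pow_atTop_nhds_zero_of_lt_one hb0 hb1
    have h2 := h1.const_mul (s * (d:ℝ))
    simpa using h2
  have hev : ∀ᶠ n : ℕ in Filter.atTop, s * (d:ℝ) * b ^ n < vmin * wmin :=
    htend.eventually (gt_mem_nhds (mul_pos hvmin hwmin))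
  obtain ⟨N, hN⟩ := Filter.eventually_atTop.mp hev
  refine ⟨p * m, Nat.mul_pos (by omega) (by omega), N, fun n hn i j => ?_⟩
  -- the main estimate
  have hcn : p * m * n = p * (m * n) := by ring
  have hJBe : ∀ k, (J ^ (p * m * n)) i k
      = lam ^ (p * m * n) * w i * ((B ^ (p * m * n)) i k / w k) := by
    intro k
    have h := powB (p * m * n) i k
    rw [eq_div_iff (ne_of_gt (mul_pos (pow_pos hlam _) (hw i)))] at h
    rw [mul_div_assoc', eq_div_iff (hw0 k)]
    linear_combination -h
  have hentry : (J ^ (p * m * n) * K⁻¹ ^ n) i j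
      = (lam ^ (p * m * n) * w i) *
        ∑ k, (B ^ (p * m * n)) i k * (K⁻¹ ^ n) k j / w k := by
    rw [Matrix.mul_apply, Finset.mul_sum]
    refine Finset.sum_congr rfl fun k _ => ?_
    rw [hJBe k]
    ring
  rw [hentry]
  refine mul_nonneg (mul_nonneg (le_of_lt (pow_pos hlam _)) (le_of_lt (hw i))) ?_
  -- split the sum
  have hsplit : ∑ k, (B ^ (p * m * n)) i k * (K⁻¹ ^ n) k j / w k
      = (∑ k, piv k * (K⁻¹ ^ n) k j / w k)
        + ∑ k, ((B ^ (p * m * n)) i k - piv k) * (K⁻¹ ^ n) k j / w k := by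
    rw [← Finset.sum_add_distrib]
    exact Finset.sum_congr rfl fun k _ => by ring
  have hT : ∑ k, piv k * (K⁻¹ ^ n) k j / w k = lam⁻¹ ^ n * v j / s := by
    have step : ∀ k, piv k * (K⁻¹ ^ n) k j / w k = v k * (K⁻¹ ^ n) k j / s := by
      intro k
      simp only [hpivdef]
      rw [div_mul_eq_mul_div, div_div,
        div_eq_div_iff (ne_of_gt (mul_pos hs (hw k))) (ne_of_gt hs)]
      ring
    rw [Finset.sum_congr rfl fun k _ => step k, ← Finset.sum_div, hvA n j]
  have hRb : |∑ k, ((B ^ (p * m * n)) i k - piv k) * (K⁻¹ ^ n) k j / w k|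
      ≤ (d:ℝ) * (th ^ (m * n) * mu ^ n / wmin) := by
    calc |∑ k, ((B ^ (p * m * n)) i k - piv k) * (K⁻¹ ^ n) k j / w k|
        ≤ ∑ k, |((B ^ (p * m * n)) i k - piv k) * (K⁻¹ ^ n) k j / w k| :=
          Finset.abs_sum_le_sum_abs _ _
      _ ≤ ∑ _k : Fin d, th ^ (m * n) * mu ^ n / wmin := by
          refine Finset.sum_le_sum fun k _ => ?_
          rw [abs_div, abs_mul, abs_of_pos (hw k)]
          refine div_le_div₀ (by positivity) ?_ hwmin (hwminle k)
          have hB' : |(B ^ (p * m * n)) i k - piv k| ≤ th ^ (m * n) := by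
            rw [hcn]
            exact hBpi (m * n) i k
          exact mul_le_mul hB' (hApow n k j) (abs_nonneg _) (pow_nonneg hth0 _)
      _ = (d:ℝ) * (th ^ (m * n) * mu ^ n / wmin) := by
          rw [Finset.sum_const, Finset.card_univ, Fintype.card_fin, nsmul_eq_mul]
  have hbn : b ^ n = th ^ (m * n) * mu ^ n * lam ^ n := by
    rw [hbdef, mul_pow, mul_pow, ← pow_mul]
    ring
  have hTD : (d:ℝ) * (th ^ (m * n) * mu ^ n / wmin) ≤ lam⁻¹ ^ n * v j / s := by
    have hNn := hN n hn
    have hlamn : (0:ℝ) < lam ^ n := pow_pos hlam n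
    rw [inv_pow, mul_div_assoc']
    rw [div_le_div_iff₀ hwmin hs]
    have e1 : (d:ℝ) * (th ^ (m * n) * mu ^ n) * s = s * (d:ℝ) * b ^ n * (lam ^ n)⁻¹ := by
      rw [hbn]
      field_simp
    have e2 : vmin * wmin ≤ v j * wmin :=
      mul_le_mul_of_nonneg_right (hvminle j) (le_of_lt hwmin)
    calc (d:ℝ) * (th ^ (m * n) * mu ^ n) * s = s * (d:ℝ) * b ^ n * (lam ^ n)⁻¹ := e1
      _ ≤ vmin * wmin * (lam ^ n)⁻¹ := by
          exact mul_le_mul_of_nonneg_right (le_of_lt hNn) (inv_nonneg.2 (le_of_lt hlamn))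
      _ ≤ (lam ^ n)⁻¹ * v j * wmin := by
          rw [show (lam ^ n)⁻¹ * v j * wmin = v j * wmin * (lam ^ n)⁻¹ by ring]
          exact mul_le_mul_of_nonneg_right e2 (inv_nonneg.2 (le_of_lt hlamn))
  rw [hsplit, hT]
  have habs := neg_abs_le (∑ k, ((B ^ (p * m * n)) i k - piv k) * (K⁻¹ ^ n) k j / w k)
  linarith
end
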